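/- Let (X_a)_{a∈A} be a family of nonempty finite integer sets indexed by a nonempty finite set A. There exist a tree H with vertex set A and an antisymmetric integer edge-weight function ϖ on H such that (1) every value of ϖ is a difference of two elements of ⋃_{a∈A} X_a, and (2) every family in S(H, ϖ) minimizes |⋃_{a∈A} (X_a + t_a)| over all (t_a) ∈ ℤ^A. -/

import Mathlib

/-!
Take a family `t₀` of shifts minimizing the size of the union. If the overlap graph of the
shifted sets (`a ≠ b` adjacent when `X a + t₀ a` and `X b + t₀ b` meet) were disconnected,
translating one side of a cut until it meets the other side would shrink the union; so this
graph is connected. On a spanning tree `H` of it put `ϖ b c = t₀ b - t₀ c`: an edge comes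
from a common point `x + t₀ b = y + t₀ c`, so `ϖ b c = y - x`. A solution of the system on
the connected graph `H` differs from `t₀` by a constant, hence is a translate of the optimum
and again optimal.
-/

/-- The translate `S + t = {s + t : s ∈ S}`. -/
def shift (S : Finset ℤ) (t : ℤ) : Finset ℤ := S.image (· + t)

open Finset

namespace SimpleGraph

lemma Preconnected.eq_of_forall_adj {V β : Type*} {G : SimpleGraph V} (hG : G.Preconnected)
    {f : V → β} (hf : ∀ v w, G.Adj v w → f v = f w) (v w : V) : f v = f w := by
  obtain ⟨p⟩ := hG v w
  induction p with
  | nil => rfl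
  | cons h _ ih => exact (hf _ _ h).trans ih

def overlapGraph {ι β : Type*} (Y : ι → Finset β) : SimpleGraph ι where
  Adj a b := a ≠ b ∧ ¬Disjoint (Y a) (Y b)
  symm := ⟨fun _ _ h => ⟨h.1.symm, fun hd => h.2 hd.symm⟩⟩
  loopless := ⟨fun _ h => h.1 rfl⟩

@[simp]
lemma overlapGraph_adj {ι β : Type*} {Y : ι → Finset β} {a b : ι} :
    (overlapGraph Y).Adj a b ↔ a ≠ b ∧ ¬Disjoint (Y a) (Y b) :=
  Iff.rfl

end SimpleGraph

open SimpleGraph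

lemma Finset.exists_card_union_image_add_lt {G : Type*} [AddGroup G] [DecidableEq G]
    {A B : Finset G} (hA : A.Nonempty) (hB : B.Nonempty) :
    ∃ δ : G, #(A ∪ B.image (· + δ)) < #A + #B := by
  obtain ⟨a, ha⟩ := hA
  obtain ⟨b, hb⟩ := hB
  refine ⟨-b + a, ?_⟩
  have hmeet : a ∈ A ∩ B.image (· + (-b + a)) :=
    mem_inter.2 ⟨ha, mem_image.2 ⟨b, hb, add_neg_cancel_left b a⟩⟩
  have := card_union_add_card_inter A (B.image (· + (-b + a)))
  have := card_pos.2 ⟨a, hmeet⟩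
  have := card_image_le (s := B) (f := (· + (-b + a)))
  omega

lemma shift_shift (S : Finset ℤ) (u δ : ℤ) : shift (shift S u) δ = shift S (u + δ) := by
  simp only [shift, image_image, Function.comp_def, add_assoc]

lemma card_shift (S : Finset ℤ) (δ : ℤ) : #(shift S δ) = #S :=
  card_image_of_injective S (add_left_injective δ)

lemma exists_sub_eq_of_not_disjoint_shift {S T : Finset ℤ} {u v : ℤ}
    (h : ¬Disjoint (shift S u) (shift T v)) : ∃ x ∈ S, ∃ y ∈ T, u - v = y - x := by
  obtain ⟨z, hzS, hzT⟩ := not_disjoint_iff.1 h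
  obtain ⟨x, hx, rfl⟩ := mem_image.1 hzS
  obtain ⟨y, hy, hxy⟩ := mem_image.1 hzT
  exact ⟨x, hx, y, hy, by omega⟩

section ShiftUnion

variable {α : Type*} [Fintype α] (X : α → Finset ℤ)

def shiftUnion (t : α → ℤ) : Finset ℤ := univ.biUnion fun a => shift (X a) (t a)

lemma shiftUnion_add_const (t : α → ℤ) (κ : ℤ) :
    shiftUnion X (fun a => t a + κ) = shift (shiftUnion X t) κ := by
  simp only [shiftUnion, shift, biUnion_image, image_image, Function.comp_def, add_assoc]

lemma card_shiftUnion_add_const (t : α → ℤ) (κ : ℤ) :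
    #(shiftUnion X fun a => t a + κ) = #(shiftUnion X t) := by
  rw [shiftUnion_add_const, card_shift]

lemma shiftUnion_eq_union_compl [DecidableEq α] (P : Finset α) (t : α → ℤ) :
    shiftUnion X t =
      P.biUnion (fun a => shift (X a) (t a)) ∪ Pᶜ.biUnion (fun a => shift (X a) (t a)) := by
  rw [shiftUnion, ← union_biUnion, union_compl]

lemma shiftUnion_piecewise_add [DecidableEq α] (P : Finset α) (t : α → ℤ) (δ : ℤ) :
    shiftUnion X (P.piecewise t fun a => t a + δ) =
      P.biUnion (fun a => shift (X a) (t a)) ∪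
        shift (Pᶜ.biUnion fun a => shift (X a) (t a)) δ := by
  rw [shiftUnion_eq_union_compl X P]
  congr 1
  · exact biUnion_congr rfl fun a ha => by rw [piecewise_eq_of_mem _ _ _ ha]
  · refine (biUnion_congr rfl fun a ha => ?_).trans biUnion_image.symm
    rw [piecewise_eq_of_notMem _ _ _ (mem_compl.1 ha), ← shift_shift, shift]

lemma exists_card_shiftUnion_lt (hX : ∀ a, (X a).Nonempty) (t : α → ℤ)
    (h : ¬(overlapGraph fun a => shift (X a) (t a)).Preconnected) :
    ∃ t', #(shiftUnion X t') < #(shiftUnion X t) := by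
  classical
  set G := overlapGraph fun a => shift (X a) (t a)
  obtain ⟨a, b, hab⟩ : ∃ a b, ¬G.Reachable a b := by
    simpa only [Preconnected, not_forall] using h
  set P := univ.filter (G.Reachable a)
  set A := P.biUnion fun a => shift (X a) (t a)
  set B := Pᶜ.biUnion fun a => shift (X a) (t a)
  have hA : A.Nonempty := ((hX a).image _).mono (subset_biUnion_of_mem _ (by simp [P]))
  have hB : B.Nonempty := ((hX b).image _).mono (subset_biUnion_of_mem _ (by simp [P, hab]))
  have hAB : Disjoint A B := by
    refine (disjoint_biUnion_left _ _ _).2 fun c hc =>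
      (disjoint_biUnion_right _ _ _).2 fun d hd => not_not.1 fun hcd => mem_compl.1 hd ?_
    have hne : c ≠ d := by rintro rfl; exact mem_compl.1 hd hc
    have had : G.Adj c d := overlapGraph_adj.2 ⟨hne, hcd⟩
    exact mem_filter.2 ⟨mem_univ d, (mem_filter.1 hc).2.trans had.reachable⟩
  obtain ⟨δ, hδ⟩ := exists_card_union_image_add_lt hA hB
  refine ⟨P.piecewise t fun a => t a + δ, ?_⟩
  rw [shiftUnion_piecewise_add, shiftUnion_eq_union_compl X P, card_union_of_disjoint hAB]
  exact hδ

end ShiftUnion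

theorem stmt_12_general {α : Type*} [Fintype α] [Nonempty α]
    (X : α → Finset ℤ) (hX : ∀ a, (X a).Nonempty) :
    ∃ (H : SimpleGraph α) (ϖ : α → α → ℤ),
      H.Connected ∧ H.IsAcyclic
      ∧ (∀ b c, H.Adj b c → ϖ b c = -ϖ c b)
      ∧ (∀ b c, H.Adj b c →
          ∃ u ∈ Finset.univ.biUnion X, ∃ v ∈ Finset.univ.biUnion X, ϖ b c = u - v)
      ∧ (∀ t : α → ℤ, (∀ b c, H.Adj b c → t b - t c = ϖ b c) →
          ∀ t' : α → ℤ,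
            (Finset.univ.biUnion fun a => shift (X a) (t a)).card
              ≤ (Finset.univ.biUnion fun a => shift (X a) (t' a)).card) := by
  set t₀ := Function.argmin fun t => #(shiftUnion X t)
  have hmin : ∀ t, #(shiftUnion X t₀) ≤ #(shiftUnion X t) :=
    fun t => Function.argmin_le (fun t => #(shiftUnion X t)) t
  have hG : (overlapGraph fun a => shift (X a) (t₀ a)).Connected := by
    refine ⟨not_not.1 fun h => ?_⟩
    obtain ⟨t, ht⟩ := exists_card_shiftUnion_lt X hX t₀ h
    exact (hmin t).not_gt ht
  obtain ⟨H, hHG, hH⟩ := hG.exists_isTree_le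
  refine ⟨H, fun b c => t₀ b - t₀ c, hH.connected, hH.isAcyclic,
    fun _ _ _ => (neg_sub _ _).symm, fun b c hbc => ?_, fun t ht t' => ?_⟩
  · obtain ⟨x, hx, y, hy, hxy⟩ :=
      exists_sub_eq_of_not_disjoint_shift (overlapGraph_adj.1 (hHG hbc)).2
    exact ⟨y, mem_biUnion.2 ⟨c, mem_univ c, hy⟩, x, mem_biUnion.2 ⟨b, mem_univ b, hx⟩,
      hxy⟩
  · obtain ⟨a₀⟩ := ‹Nonempty α›
    have hconst := hH.connected.preconnected.eq_of_forall_adj (f := fun a => t a - t₀ a)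
      (fun b c hbc => by have := ht b c hbc; dsimp only at this ⊢; omega)
    have ht_eq : t = fun a => t₀ a + (t a₀ - t₀ a₀) := funext fun a => by
      have := hconst a a₀; omega
    change #(shiftUnion X t) ≤ #(shiftUnion X t')
    rw [ht_eq, card_shiftUnion_add_const]
    exact hmin t'

theorem stmt_12 {α : Type*} [Fintype α] [DecidableEq α] [Nonempty α]
    (X : α → Finset ℤ) (hX : ∀ a, (X a).Nonempty) :
    ∃ (H : SimpleGraph α) (ϖ : α → α → ℤ),
      H.Connected ∧ H.IsAcyclic
      ∧ (∀ b c, H.Adj b c → ϖ b c = -ϖ c b)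
      ∧ (∀ b c, H.Adj b c →
          ∃ u ∈ Finset.univ.biUnion X, ∃ v ∈ Finset.univ.biUnion X, ϖ b c = u - v)
      ∧ (∀ t : α → ℤ, (∀ b c, H.Adj b c → t b - t c = ϖ b c) →
          ∀ t' : α → ℤ,
            (Finset.univ.biUnion fun a => shift (X a) (t a)).card
              ≤ (Finset.univ.biUnion fun a => shift (X a) (t' a)).card) :=
  stmt_12_general X hX
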